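/- Let L be a real symmetric positive semidefinite matrix with λ_max(L) ≤ 2 and let Λ be a diagonal matrix with diagonal entries in (0,1]. Then the matrix L − (1/2)·Lᵀ Λ L is positive semidefinite. -/

import Mathlib

/-!
By the continuous functional calculus, `L - ½ L²` is `f(L)` for `f(x) = x(2 - x)/2`, which is
nonnegative on `spectrum L ⊆ [0, 2]`. Since `Λ ≤ 1`, conjugating by `L` gives `Lᵀ Λ L ≤ L²`, so
`L - ½ Lᵀ Λ L ≥ L - ½ L² ≥ 0`.
-/

open Matrix
open scoped MatrixOrder

section CFC

variable {A : Type*} [Ring A] [StarRing A] [PartialOrder A] [StarOrderedRing A]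
  [TopologicalSpace A] [Algebra ℝ A] [ContinuousFunctionalCalculus ℝ A IsSelfAdjoint]
  [NonnegSpectrumClass ℝ A]

theorem sub_half_mul_self_nonneg {a : A} (ha : 0 ≤ a) (h2 : ∀ μ ∈ spectrum ℝ a, μ ≤ 2) :
    0 ≤ a - (1 / 2 : ℝ) • (a * a) := by
  have hcfc : cfc (fun x : ℝ => x - 1 / 2 * x ^ 2) a = a - (1 / 2 : ℝ) • (a * a) := by
    rw [cfc_sub _ _ a, cfc_const_mul _ _ a, cfc_pow _ _ a, cfc_id' ℝ a, sq]
  rw [← hcfc]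
  refine cfc_nonneg fun μ hμ => ?_
  nlinarith [spectrum_nonneg_of_nonneg ha hμ, h2 μ hμ]

theorem sub_half_star_mul_mul_nonneg [PosSMulMono ℝ A] {a b : A} (ha : 0 ≤ a)
    (h2 : ∀ μ ∈ spectrum ℝ a, μ ≤ 2) (hb : b ≤ 1) :
    0 ≤ a - (1 / 2 : ℝ) • (star a * b * a) := by
  have hab : star a * b * a ≤ a * a := by
    simpa [ha.isSelfAdjoint.star_eq] using star_left_conjugate_le_conjugate hb a
  calc 0 ≤ a - (1 / 2 : ℝ) • (a * a) := sub_half_mul_self_nonneg ha h2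
    _ ≤ a - (1 / 2 : ℝ) • (star a * b * a) := by gcongr

end CFC

theorem Matrix.diagonal_le_one {n : Type*} [Fintype n] [DecidableEq n] {d : n → ℝ}
    (hd : ∀ i, d i ≤ 1) : diagonal d ≤ 1 := by
  rw [Matrix.le_iff, ← diagonal_one, diagonal_sub]
  exact PosSemidef.diagonal fun i => sub_nonneg.mpr (hd i)

/-- If `L` is symmetric PSD with all eigenvalues at most `2` and `Λ` is diagonal with
diagonal entries in `(0, 1]`, then `L - (1/2) Lᵀ Λ L` is positive semidefinite. -/
theorem sub_half_LT_Lambda_L_posSemidef {N : ℕ} (L : Matrix (Fin N) (Fin N) ℝ)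
    (hL : L.PosSemidef)
    (hmax : ∀ μ ∈ spectrum ℝ L, μ ≤ 2)
    (d : Fin N → ℝ) (hd : ∀ i, 0 < d i ∧ d i ≤ 1) :
    (L - (1 / 2 : ℝ) • (Lᵀ * Matrix.diagonal d * L)).PosSemidef := by
  have hstar : star L = Lᵀ := by
    rw [star_eq_conjTranspose, conjTranspose_eq_transpose_of_trivial]
  rw [← nonneg_iff_posSemidef, ← hstar]
  exact sub_half_star_mul_mul_nonneg hL.nonneg hmax (diagonal_le_one fun i => (hd i).2)
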